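/- Let L_1 : ℤ[x^{±1}, q^{±1}] → ℤ[q^{±1/1}] be the ℤ[q^{±1}]-linear map sending x^a to q^{-a²}. Then for every nonnegative integer k, L_1((x;q)_{k+1}(x^{-1};q)_{k+1}) = 2·(-1)^{k+1}·q^{-(k+1)(k+2)/2}·(q^{k+1};q)_{k+1}. -/

import Mathlib

/-!
Write `L` for `Lap gauss`, `x^a ↦ q^{-a²}`. Since `q^{-(a+1)²} = q^{-1} q^{-2a} q^{-a²}`, we
have `L(x · f(q²x)) = q⁻¹ L(f)`, and `L` is invariant under `x ↦ x⁻¹`.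

Factor `(x;q)_{k+1} (x⁻¹;q)_{k+1} = c · x^{-k-1} (1 - x) h(x)` with
`h = centralProd k = ∏_{j=-k}^{k} (1 - q^j x)`. The moments `γ_m = centralMoment k m = L(x^m h)`
are antisymmetric under `m ↦ -m-2k-1`, and
`h(q²x) (1 - q^{-k}x)(1 - q^{1-k}x) = h(x) (1 - q^{k+1}x)(1 - q^{k+2}x)` turns the shift rule into
a relation among `γ_{-k-2}, …, γ_{-k+1}` which the antisymmetry collapses to
`q^{2k+3} γ_{-k-2} = (1 + q^{k+1} + q^{k+2}) γ_{-k-1}`. Multiplying by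
`(1 - q^{k+1}x)(1 - q^{k+1}x⁻¹)` then gives
`q^{k+2} L_{k+1} = -(1 + q^{k+1})(1 - q^{2k+3}) L_k`, a recursion the closed form also satisfies.
-/

open LaurentPolynomial Finset

/-- The ring `ℤ[q^{±1}]` of Laurent polynomials in `q`. -/
noncomputable abbrev Rq := LaurentPolynomial ℤ

/-- The `ℤ[q^{±1}]`-linear "Laplace transform" on `ℤ[x^{±1}, q^{±1}]`
(modeled as Laurent polynomials in `x` over `ℤ[q^{±1}]`), sending the monomial
`x^a` to `g a ∈ ℤ[q^{±1}]`. -/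
noncomputable def Lap (g : ℤ → Rq) (f : LaurentPolynomial Rq) : Rq :=
  Finsupp.sum f.coeff fun a c => c * g a

theorem T_mul_T_neg {R : Type*} [Semiring R] (n : ℤ) :
    (T n * T (-n) : LaurentPolynomial R) = 1 := by
  rw [← T_add, add_neg_cancel, T_zero]

section Lap

variable (g : ℤ → Rq)

theorem lap_eq_constr : Lap g = (AddMonoidAlgebra.basis ℤ Rq).constr Rq g := by
  funext f; rw [Module.Basis.constr_apply]; rfl

theorem lap_add (f h : LaurentPolynomial Rq) : Lap g (f + h) = Lap g f + Lap g h := by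
  simp only [lap_eq_constr, map_add]

theorem lap_sub (f h : LaurentPolynomial Rq) : Lap g (f - h) = Lap g f - Lap g h := by
  simp only [lap_eq_constr, map_sub]

theorem lap_neg (f : LaurentPolynomial Rq) : Lap g (-f) = -Lap g f := by
  simp only [lap_eq_constr, map_neg]

theorem lap_C_mul (c : Rq) (f : LaurentPolynomial Rq) : Lap g (C c * f) = c * Lap g f := by
  rw [← smul_eq_C_mul, lap_eq_constr, map_smul, smul_eq_mul]

theorem lap_T (n : ℤ) : Lap g (T n) = g n := by
  rw [lap_eq_constr]; exact (AddMonoidAlgebra.basis ℤ Rq).constr_basis Rq g n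

theorem lap_C_mul_T (c : Rq) (n : ℤ) : Lap g (C c * T n) = c * g n := by
  rw [lap_C_mul, lap_T]

theorem lap_invert (hg : ∀ a, g (-a) = g a) (f : LaurentPolynomial Rq) :
    Lap g (invert f) = Lap g f := by
  induction f using LaurentPolynomial.induction_on' with
  | add f h hf hh => rw [map_add, lap_add, lap_add, hf, hh]
  | C_mul_T n c => rw [map_mul, invert_C, invert_T, lap_C_mul_T, lap_C_mul_T, hg]

end Lap

theorem two_ne_zero_Rq : (2 : Rq) ≠ 0 := by
  rw [← map_ofNat Polynomial.toLaurent 2]; exact Polynomial.toLaurent_ne_zero.mpr two_ne_zero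

noncomputable def gauss (a : ℤ) : Rq := T (-a ^ 2)

/-- The substitution `x ↦ q² x`. -/
noncomputable def dilate : LaurentPolynomial Rq →ₐ[Rq] LaurentPolynomial Rq :=
  AddMonoidAlgebra.lift Rq _ ℤ
    { toFun := fun a => C (T (2 * a.toAdd)) * T a.toAdd
      map_one' := by simp [T_zero]
      map_mul' := fun a b => by
        simp only [toAdd_mul, mul_add, T_add, map_mul]; ring }

theorem dilate_T (n : ℤ) : dilate (T n) = C (T (2 * n)) * T n := by
  rw [T, dilate, AddMonoidAlgebra.lift_single, one_smul]; rfl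

theorem dilate_C (c : Rq) : dilate (C c) = C c := by
  rw [C_eq_algebraMap, AlgHom.commutes]

theorem lap_gauss_T_mul_dilate (j : ℤ) (f : LaurentPolynomial Rq) :
    Lap gauss (T j * dilate f) = T (1 - 2 * j) * Lap gauss (T (j - 1) * f) := by
  induction f using LaurentPolynomial.induction_on' with
  | add f h hf hh => rw [map_add, mul_add, mul_add, lap_add, lap_add, hf, hh, mul_add]
  | C_mul_T n c =>
    have hl : T j * dilate (C c * T n) = C (c * T (2 * n)) * T (j + n) := by
      rw [map_mul, dilate_C, dilate_T, map_mul, T_add j n]; ring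
    have hr : T (j - 1) * (C c * T n) = C c * T (j - 1 + n) := by rw [T_add]; ring
    rw [hl, hr, lap_C_mul_T, lap_C_mul_T, gauss, gauss, mul_left_comm, mul_assoc, ← T_add,
      ← T_add]
    congr 2; ring

section Products

variable {M : Type*} [CommMonoid M] (f : ℤ → M)

theorem prod_range_shift_mul (a : ℤ) (N : ℕ) :
    (∏ i ∈ range N, f (a + 1 + i)) * f a = (∏ i ∈ range N, f (a + i)) * f (a + N) :=
  calc (∏ i ∈ range N, f (a + 1 + i)) * f a = ∏ i ∈ range (N + 1), f (a + i) := by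
        rw [prod_range_succ', Nat.cast_zero, add_zero]
        exact congrArg (· * f a) (prod_congr rfl fun i _ => congrArg f (by push_cast; ring))
    _ = _ := prod_range_succ _ N

theorem prod_range_shift_two_mul (a : ℤ) (N : ℕ) :
    (∏ i ∈ range N, f (a + 2 + i)) * (f a * f (a + 1)) =
      (∏ i ∈ range N, f (a + i)) * (f (a + N) * f (a + N + 1)) := by
  have h1 := prod_range_shift_mul f (a + 1) N
  have h0 := prod_range_shift_mul f a N
  rw [add_assoc a 1 1, one_add_one_eq_two] at h1
  calc (∏ i ∈ range N, f (a + 2 + i)) * (f a * f (a + 1))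
      = (∏ i ∈ range N, f (a + 1 + i)) * f a * f (a + 1 + N) := by
        rw [← mul_assoc, mul_right_comm _ (f a), h1, mul_right_comm]
    _ = _ := by rw [h0, mul_assoc, add_right_comm]

theorem prod_range_mul_prod_range_neg (k : ℕ) :
    (∏ i ∈ range (k + 1), f i) * ∏ i ∈ range (k + 1), f (-i) =
      f 0 * ∏ i ∈ range (2 * k + 1), f (-k + i) := by
  have hneg : ∏ i ∈ range (k + 1), f (-i) = f 0 * ∏ i ∈ range k, f (-k + i) := by
    rw [prod_range_succ', ← prod_range_reflect, mul_comm, Nat.cast_zero, neg_zero]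
    refine congrArg (f 0 * ·) (prod_congr rfl fun i hi => congrArg f ?_)
    have := mem_range.mp hi
    omega
  rw [hneg, show 2 * k + 1 = k + (k + 1) by ring,
    prod_range_add (fun i : ℕ => f (-k + i)) k (k + 1)]
  have hpos : ∏ i ∈ range (k + 1), f (-k + (k + i : ℕ)) = ∏ i ∈ range (k + 1), f i :=
    prod_congr rfl fun i _ => congrArg f (by push_cast; ring)
  rw [hpos]
  ac_rfl

end Products

theorem prod_T (s : Finset ℕ) (a : ℕ → ℤ) :
    ∏ i ∈ s, (T (a i) : Rq) = T (∑ i ∈ s, a i) := by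
  induction s using Finset.cons_induction with
  | empty => rw [prod_empty, sum_empty, T_zero]
  | cons i s hi ih => rw [prod_cons, sum_cons, ih, T_add]

theorem sum_range_neg_add_eq_zero (k : ℕ) :
    ∑ i ∈ range (2 * k + 1), (-(k : ℤ) + i) = 0 := by
  have h := sum_range_id_mul_two (2 * k + 1)
  rw [sum_add_distrib, sum_const, card_range, ← Nat.cast_sum]
  simp only [Nat.add_sub_cancel] at h
  have : ∑ i ∈ range (2 * k + 1), i = (2 * k + 1) * k := by nlinarith
  rw [this]; push_cast; ring

theorem gauss_neg (a : ℤ) : gauss (-a) = gauss a := by rw [gauss, gauss, neg_sq]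

noncomputable def linFactor (j : ℤ) : LaurentPolynomial Rq := 1 - T 1 * C (T j)

noncomputable def invLinFactor (j : ℤ) : LaurentPolynomial Rq := 1 - T (-1) * C (T j)

noncomputable def pochPair (k : ℕ) : LaurentPolynomial Rq :=
  (∏ i ∈ range (k + 1), linFactor i) * ∏ i ∈ range (k + 1), invLinFactor i

noncomputable def centralProd (k : ℕ) : LaurentPolynomial Rq :=
  ∏ i ∈ range (2 * k + 1), linFactor (-k + i)

noncomputable def centralMoment (k : ℕ) (m : ℤ) : Rq := Lap gauss (T m * centralProd k)

theorem invert_linFactor (j : ℤ) : invert (linFactor j) = invLinFactor j := by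
  rw [linFactor, invLinFactor, map_sub, map_one, map_mul, invert_T, invert_C]

theorem invLinFactor_eq (j : ℤ) :
    invLinFactor j = -(C (T j : Rq) * T (-1)) * linFactor (-j) := by
  have hq : C (T j) * C (T (-j)) = (1 : LaurentPolynomial Rq) := by
    rw [← map_mul, T_mul_T_neg, map_one]
  rw [invLinFactor, linFactor]
  linear_combination (-(T (-1) * T 1 : LaurentPolynomial Rq)) * hq - T_mul_T_neg (R := Rq) 1

theorem dilate_linFactor (j : ℤ) : dilate (linFactor j) = linFactor (j + 2) := by
  rw [linFactor, linFactor, map_sub, map_one, map_mul, dilate_T, dilate_C, mul_one, T_add j 2,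
    map_mul]
  ring

theorem invert_centralProd (k : ℕ) :
    invert (centralProd k) = -(T (-(2 * k + 1)) : LaurentPolynomial Rq) * centralProd k := by
  have hconst : ∏ i ∈ range (2 * k + 1), -(C (T (-k + i) : Rq) * T (-1)) =
      -(T (-(2 * k + 1)) : LaurentPolynomial Rq) := by
    simp only [neg_eq_neg_one_mul (C (T _ : Rq) * T (-1) : LaurentPolynomial Rq),
      prod_mul_distrib, prod_const, card_range, ← map_prod, prod_T, sum_range_neg_add_eq_zero,
      T_zero, map_one, T_pow,
      (odd_two_mul_add_one k).neg_one_pow]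
    push_cast; ring_nf
  have hrefl : ∏ i ∈ range (2 * k + 1), linFactor (-(-k + i)) =
      ∏ i ∈ range (2 * k + 1), linFactor (-k + i) := by
    rw [← prod_range_reflect]
    refine prod_congr rfl fun i hi => congrArg linFactor ?_
    have := mem_range.mp hi
    omega
  rw [centralProd, map_prod]
  simp only [invert_linFactor, invLinFactor_eq]
  rw [prod_mul_distrib, hconst, hrefl]

theorem centralMoment_neg_sub (k : ℕ) (m : ℤ) :
    centralMoment k (-m - (2 * k + 1)) = -centralMoment k m := by
  have hinv : invert (T m * centralProd k) = -(T (-m - (2 * k + 1)) * centralProd k) := by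
    rw [map_mul, invert_T, invert_centralProd, sub_eq_add_neg, T_add]; ring
  rw [centralMoment, centralMoment, ← lap_invert gauss gauss_neg (T m * _), hinv, lap_neg,
    neg_neg]

theorem lap_T_mul_mul_linFactor_mul_linFactor (g : ℤ → Rq) (m a b : ℤ)
    (F : LaurentPolynomial Rq) :
    Lap g (T m * (F * (linFactor a * linFactor b))) = Lap g (T m * F) -
      (T a + T b) * Lap g (T (m + 1) * F) + T (a + b) * Lap g (T (m + 2) * F) := by
  have h : T m * (F * (linFactor a * linFactor b)) =
      T m * F - C (T a + T b) * (T (m + 1) * F) + C (T (a + b)) * (T (m + 2) * F) := by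
    rw [linFactor, linFactor, T_add m 1, T_add m 2, T_add a b, map_add, map_mul,
      show (2 : ℤ) = 1 + 1 from rfl, T_add 1 1]
    ring
  rw [h, lap_add, lap_sub, lap_C_mul, lap_C_mul]

theorem dilate_centralProd_mul (k : ℕ) :
    dilate (centralProd k) * (linFactor (-k) * linFactor (-k + 1)) =
      centralProd k * (linFactor (k + 1) * linFactor (k + 2)) := by
  have hd : dilate (centralProd k) = ∏ i ∈ range (2 * k + 1), linFactor (-k + 2 + i) := by
    rw [centralProd, map_prod]
    exact prod_congr rfl fun i _ => by rw [dilate_linFactor, add_right_comm]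
  have htop : (-k : ℤ) + (2 * k + 1 : ℕ) = k + 1 := by push_cast; ring
  rw [hd, prod_range_shift_two_mul, htop, add_assoc _ 1 1, one_add_one_eq_two, centralProd]

theorem centralMoment_neg_self (k : ℕ) : centralMoment k (-k) = -centralMoment k (-k - 1) := by
  rw [← centralMoment_neg_sub]; congr 1; ring

theorem centralMoment_neg_self_add_one (k : ℕ) :
    centralMoment k (-k + 1) = -centralMoment k (-k - 2) := by
  rw [← centralMoment_neg_sub]; congr 1; ring

theorem centralMoment_relation (k : ℕ) :
    T (2 * k + 3) * centralMoment k (-k - 2) =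
      (1 + T (k + 1) + T (k + 2)) * centralMoment k (-k - 1) := by
  have key := congrArg (fun p => Lap gauss (T (-k - 1) * p)) (dilate_centralProd_mul k)
  have hγ : ∀ m, Lap gauss (T m * centralProd k) = centralMoment k m := fun _ => rfl
  simp only [lap_T_mul_mul_linFactor_mul_linFactor, lap_gauss_T_mul_dilate, hγ] at key
  rw [show -(k : ℤ) - 1 - 1 = -k - 2 by ring, show -(k : ℤ) - 1 + 1 - 1 = -k - 1 by ring,
    show -(k : ℤ) - 1 + 2 - 1 = -k by ring, show -(k : ℤ) - 1 + 2 = -k + 1 by ring,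
    show -(k : ℤ) - 1 + 1 = -k by ring, centralMoment_neg_self,
    centralMoment_neg_self_add_one] at key
  have t₀ : (T (1 - 2 * (-k - 1)) : Rq) = T (2 * k + 3) := by congr 1; ring
  have t₁ : (T (-k) + T (-k + 1)) * T (1 - 2 * -k) = (T (k + 1) + T (k + 2) : Rq) := by
    rw [add_mul, ← T_add, ← T_add]; congr 2 <;> ring
  have t₂ : T (-k + (-k + 1)) * T (1 - 2 * (-k + 1)) = (1 : Rq) := by
    rw [← T_add, ← T_zero]; congr 1; ring
  have t₃ : (T (k + 1 + (k + 2)) : Rq) = T (2 * k + 3) := by congr 1; ring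
  rw [t₀, t₃] at key
  refine mul_left_cancel₀ two_ne_zero_Rq ?_
  linear_combination key + centralMoment k (-k - 1) * t₁ + centralMoment k (-k - 1) * t₂

theorem pochPair_eq (k : ℕ) :
    pochPair k = C (∏ i ∈ range (k + 1), -(T i : Rq)) *
      (T (-(k + 1)) * (linFactor 0 * centralProd k)) := by
  have hconst : ∏ i ∈ range (k + 1), -(C (T i : Rq) * T (-1)) =
      C (∏ i ∈ range (k + 1), -(T i : Rq)) * T (-(k + 1)) := by
    have hfac : ∀ i : ℕ, -(C (T i : Rq) * T (-1)) = C (-(T i : Rq)) * T (-1) := fun i => by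
      rw [map_neg]; ring
    simp only [hfac, prod_mul_distrib, ← map_prod, prod_const, card_range, T_pow]
    congr 2; push_cast; ring
  have hsplit := prod_range_mul_prod_range_neg linFactor k
  rw [pochPair, centralProd]
  simp only [invLinFactor_eq, prod_mul_distrib, hconst]
  linear_combination C (∏ i ∈ range (k + 1), -(T i : Rq)) * T (-(k + 1)) * hsplit

theorem lap_gauss_T_mul_pochPair (k : ℕ) (j : ℤ) :
    Lap gauss (T j * pochPair k) = (∏ i ∈ range (k + 1), -(T i : Rq)) *
      (centralMoment k (j - (k + 1)) - centralMoment k (j - k)) := by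
  have hx : T (-(k + 1)) * T 1 = (T (-k) : LaurentPolynomial Rq) := by
    rw [← T_add]; congr 1; ring
  have h : T j * pochPair k = C (∏ i ∈ range (k + 1), -(T i : Rq)) *
      (T (j - (k + 1)) * centralProd k - T (j - k) * centralProd k) := by
    rw [pochPair_eq, linFactor, T_zero, map_one, mul_one, sub_eq_add_neg j, T_add,
      sub_eq_add_neg j (k : ℤ), T_add]
    linear_combination (-(C (∏ i ∈ range (k + 1), -(T i : Rq))) * T j * centralProd k) * hx
  rw [h, lap_C_mul, lap_sub]
  rfl

theorem lap_gauss_pochPair_succ (k : ℕ) :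
    T (k + 2) * Lap gauss (pochPair (k + 1)) =
      -((1 + T (k + 1)) * (1 - T (2 * k + 3))) * Lap gauss (pochPair k) := by
  set w : Rq := T (k + 1) with hw
  have hsucc : pochPair (k + 1) = C (1 + w * w) * (T 0 * pochPair k) - C w * (T 1 * pochPair k)
      - C w * (T (-1) * pochPair k) := by
    have hP : pochPair (k + 1) = pochPair k * (linFactor (k + 1) * invLinFactor (k + 1)) := by
      simp only [pochPair, prod_range_succ]; push_cast; ring
    rw [hP, linFactor, invLinFactor, T_zero, map_add, map_mul, map_one]
    linear_combination (pochPair k * C w * C w) * T_mul_T_neg (R := Rq) 1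
  have h0 : Lap gauss (pochPair k) = Lap gauss (T 0 * pochPair k) := by rw [T_zero, one_mul]
  have hq₂ : (T (k + 2) : Rq) = w * T 1 := by rw [hw, ← T_add]; ring_nf
  have hq₃ : (T (2 * k + 3) : Rq) = w * w * T 1 := by rw [hw, ← T_add, ← T_add]; ring_nf
  have hrel := centralMoment_relation k
  rw [hq₂, hq₃] at hrel
  rw [hsucc, h0, lap_sub, lap_sub, lap_C_mul, lap_C_mul, lap_C_mul, lap_gauss_T_mul_pochPair,
    lap_gauss_T_mul_pochPair, lap_gauss_T_mul_pochPair, show (0 : ℤ) - (k + 1) = -k - 1 by ring,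
    show (1 : ℤ) - (k + 1) = -k by ring, show (-1 : ℤ) - (k + 1) = -k - 2 by ring,
    show (0 : ℤ) - k = -k by ring, show (1 : ℤ) - k = -k + 1 by ring,
    show (-1 : ℤ) - k = -k - 1 by ring, centralMoment_neg_self, centralMoment_neg_self_add_one,
    hq₂, hq₃]
  linear_combination (-2 * ∏ i ∈ range (k + 1), -(T i : Rq)) * hrel

noncomputable def closedForm (k : ℕ) : Rq :=
  2 * (-1) ^ (k + 1) * T (-(((k : ℤ) + 1) * ((k : ℤ) + 2) / 2)) *
    ∏ j ∈ range (k + 1), (1 - T ((k : ℤ) + 1 + j))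

theorem closedForm_succ (k : ℕ) :
    T (k + 2) * closedForm (k + 1) =
      -((1 + T (k + 1)) * (1 - T (2 * k + 3))) * closedForm k := by
  have hexp : -((((k + 1 : ℕ) : ℤ) + 1) * (((k + 1 : ℕ) : ℤ) + 2) / 2) =
      -(((k : ℤ) + 1) * ((k : ℤ) + 2) / 2) + -((k : ℤ) + 2) := by
    rw [show (((k + 1 : ℕ) : ℤ) + 1) * (((k + 1 : ℕ) : ℤ) + 2) =
        ((k : ℤ) + 1) * ((k : ℤ) + 2) + ((k : ℤ) + 2) * 2 by push_cast; ring,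
      Int.add_mul_ediv_right _ _ two_ne_zero]
    ring
  have hnew : ∏ j ∈ range (k + 1 + 1), (1 - (T (((k + 1 : ℕ) : ℤ) + 1 + j) : Rq)) =
      (∏ j ∈ range k, (1 - T ((k : ℤ) + 2 + j))) *
        ((1 - T (2 * k + 2)) * (1 - T (2 * k + 3))) := by
    rw [prod_range_succ, prod_range_succ, mul_assoc]
    push_cast
    rw [show (k : ℤ) + 1 + 1 + k = 2 * k + 2 by ring,
      show (k : ℤ) + 1 + 1 + (k + 1) = 2 * k + 3 by ring]
    exact congrArg (· * _) (prod_congr rfl fun j _ => by ring_nf)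
  have hold : ∏ j ∈ range (k + 1), (1 - (T ((k : ℤ) + 1 + j) : Rq)) =
      (1 - T (k + 1)) * ∏ j ∈ range k, (1 - T ((k : ℤ) + 2 + j)) := by
    rw [prod_range_succ', mul_comm, Nat.cast_zero, add_zero]
    exact congrArg (_ * ·) (prod_congr rfl fun j _ => by push_cast; ring_nf)
  have hsq : (T (k + 1) * T (k + 1) : Rq) = T (2 * k + 2) := by rw [← T_add]; ring_nf
  have hT : (T (-((((k + 1 : ℕ) : ℤ) + 1) * (((k + 1 : ℕ) : ℤ) + 2) / 2)) : Rq) =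
      T (-(((k : ℤ) + 1) * ((k : ℤ) + 2) / 2)) * T (-((k : ℤ) + 2)) := by rw [hexp, T_add]
  rw [closedForm, closedForm, hT, hnew, hold, pow_succ]
  set E : Rq := T (-(((k : ℤ) + 1) * ((k : ℤ) + 2) / 2))
  set R : Rq := ∏ j ∈ range k, (1 - T ((k : ℤ) + 2 + j))
  linear_combination (-2 * (-1) ^ (k + 1) * E * R * (1 - T (2 * k + 3)) * (1 - T (2 * k + 2))) *
      T_mul_T_neg (R := ℤ) ((k : ℤ) + 2) +
    (-2 * (-1) ^ (k + 1) * E * R * (1 - T (2 * k + 3))) * hsq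

theorem lap_gauss_pochPair_zero : Lap gauss (pochPair 0) = closedForm 0 := by
  have hP : pochPair 0 = C 2 * T 0 - C 1 * T 1 - C 1 * T (-1) := by
    simp only [pochPair, zero_add, prod_range_one, linFactor, invLinFactor, Nat.cast_zero, T_zero,
      map_one, mul_one, map_ofNat]
    linear_combination T_mul_T_neg (R := Rq) 1
  rw [hP, lap_sub, lap_sub, lap_C_mul_T, lap_C_mul_T, lap_C_mul_T, closedForm]
  norm_num [gauss, T_zero]
  linear_combination -2 * T_mul_T_neg (R := ℤ) 1

/-- Lemma 4.2 (second formula): with `L_1 : x^a ↦ q^{-a²}`,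
`L_1((x;q)_{k+1}(x^{-1};q)_{k+1}) = 2 (-1)^{k+1} q^{-(k+1)(k+2)/2} (q^{k+1};q)_{k+1}`. -/
theorem laplace_one (k : ℕ) :
    Lap (fun a => T (-a ^ 2))
        ((∏ i ∈ Finset.range (k + 1), (1 - T 1 * C (T (i : ℤ)))) *
          ∏ i ∈ Finset.range (k + 1), (1 - T (-1) * C (T (i : ℤ)))) =
      2 * (-1) ^ (k + 1) * T (-(((k : ℤ) + 1) * ((k : ℤ) + 2) / 2)) *
        ∏ j ∈ Finset.range (k + 1), (1 - T ((k : ℤ) + 1 + j)) := by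
  change Lap gauss (pochPair k) = closedForm k
  induction k with
  | zero => exact lap_gauss_pochPair_zero
  | succ k ih =>
    refine (isUnit_T ((k : ℤ) + 2)).mul_left_cancel ?_
    rw [lap_gauss_pochPair_succ, ih, closedForm_succ]
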